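/- Let t ∈ ℝ, let μ be an ergodic T-invariant probability measure on (Θ, 𝓑), and let φ : Θ → [0,∞) be any measurable T_t-invariant function. Then either φ = 0 μ-almost everywhere or φ = φ_t μ-almost everywhere. -/

import Mathlib

open MeasureTheory Filter Topology

/-- The general setting of the paper: a measurable base system with invertible
driving map `T`, a concave fibre function `h` (with its derivative `h'` on `[0,∞)`)
and a bounded measurable positive function `g`. -/
structure Setting (Θ : Type*) [MeasurableSpace Θ] where
  T : Θ → Θ
  Tinv : Θ → Θ
  left_inv : Function.LeftInverse Tinv T
  right_inv : Function.RightInverse Tinv T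
  T_meas : Measurable T
  Tinv_meas : Measurable Tinv
  h : ℝ → ℝ
  h' : ℝ → ℝ
  h_hasDeriv : ∀ x ∈ Set.Ici (0 : ℝ), HasDerivWithinAt h (h' x) (Set.Ici 0) x
  h'_cont : ContinuousOn h' (Set.Ici 0)
  h_strictConcave : StrictConcaveOn ℝ (Set.Ici 0) h
  h_zero : h 0 = 0
  h'_pos : ∀ x : ℝ, 0 < x → 0 < h' x
  h'_zero : h' 0 = 1
  h_sublinear : Tendsto (fun x => h x / x) atTop (𝓝 0)
  g : Θ → ℝ
  g_pos : ∀ θ, 0 < g θ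
  g_bdd : ∃ C : ℝ, ∀ θ, g θ ≤ C
  g_meas : Measurable g

namespace Setting

variable {Θ : Type*} [MeasurableSpace Θ]

/-- The fibre maps `f_t(θ,x) = e^{-t} g(θ) h(x)`. -/
noncomputable def f (S : Setting Θ) (t : ℝ) (θ : Θ) (x : ℝ) : ℝ :=
  Real.exp (-t) * S.g θ * S.h x

/-- The iterated fibre maps: `fn t 0 θ x = x` and
`fn t (n+1) θ x = f t (T^[n] θ) (fn t n θ x)`, so that `fn t 1 = f t`. -/
noncomputable def fn (S : Setting Θ) (t : ℝ) : ℕ → Θ → ℝ → ℝ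
  | 0, _, x => x
  | n + 1, θ, x => S.f t (S.T^[n] θ) (S.fn t n θ x)

/-- `ψ_{t,n}(θ) = f_t^n(T^{-n}θ, M)`. -/
noncomputable def ψ (S : Setting Θ) (t M : ℝ) (n : ℕ) (θ : Θ) : ℝ :=
  S.fn t n (S.Tinv^[n] θ) M

/-- The maximal invariant function `φ_t(θ) = inf_{n ≥ 1} ψ_{t,n}(θ)`. -/
noncomputable def φ (S : Setting Θ) (t M : ℝ) (θ : Θ) : ℝ :=
  ⨅ n : ℕ, S.ψ t M (n + 1) θ

/-- The zero set `N_t = {θ : φ_t(θ) = 0}`. -/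
noncomputable def Nset (S : Setting Θ) (t M : ℝ) : Set Θ := {θ | S.φ t M θ = 0}

/-- The critical parameter `t_c(θ) = inf {t : φ_t(θ) = 0}`. -/
noncomputable def tc (S : Setting Θ) (M : ℝ → ℝ) (θ : Θ) : ℝ :=
  sInf {t : ℝ | S.φ t (M t) θ = 0}

/-- The bifurcation set `S_t = {θ : t_c(θ) = t}`. -/
noncomputable def Sset (S : Setting Θ) (M : ℝ → ℝ) (t : ℝ) : Set Θ :=
  {θ | S.tc M θ = t}

/-- The Birkhoff average `Γ^{(n)}(θ) = (1/n) ∑_{k=1}^n log g(T^{-k}θ)`. -/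
noncomputable def Γn (S : Setting Θ) (n : ℕ) (θ : Θ) : ℝ :=
  (∑ k ∈ Finset.range n, Real.log (S.g (S.Tinv^[k + 1] θ))) / n

/-- The lower backwards Lyapunov average `Γ(θ) = liminf_n Γ^{(n)}(θ)`. -/
noncomputable def Γ (S : Setting Θ) (θ : Θ) : ℝ :=
  Filter.liminf (fun n : ℕ => S.Γn n θ) Filter.atTop

/-- The averaged exponent `γ(μ) = ∫ log g dμ`. -/
noncomputable def γfn (S : Setting Θ) (μ : Measure Θ) : ℝ :=
  ∫ θ, Real.log (S.g θ) ∂μ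

/-- The function `H(x) = log (h(x)/x)`. -/
noncomputable def Hfn (S : Setting Θ) (x : ℝ) : ℝ := Real.log (S.h x / x)

end Setting

/-! The zero set of a `T_t`-invariant `φ` is `T`-invariant, so by ergodicity `φ = 0` a.e. or
`φ > 0` a.e. In the second case, compare a function `a > 0` with `f_t(θ, a θ) ≤ a (T θ)` and a
function `b ≥ 0` with `b (T θ) ≤ f_t(θ, b θ)`: since `h x / x` is strictly decreasing, the quantity
`max (b / a) 1` is nonincreasing along `T` and strictly decreasing where `b > a`. A function that is
nonincreasing along a measure-preserving map of a finite measure space is a.e. invariant, hence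
`b ≤ a` a.e. With `a = M`, `b = φ` this gives `φ ≤ M` a.e., hence `φ ≤ ψ_{t,n}` along a.e. backward
orbit and `φ ≤ φ_t`; with `a = φ`, `b = φ_t` it gives `φ_t ≤ φ`. -/

theorem MeasureTheory.MeasurePreserving.ae_comp_eq_of_ae_comp_le {α : Type*}
    [MeasurableSpace α] {μ : Measure α} [IsFiniteMeasure μ] {f : α → α}
    (hf : MeasurePreserving f μ μ) {u : α → ℝ} (hu : Measurable u)
    (hle : ∀ᵐ x ∂μ, u (f x) ≤ u x) : ∀ᵐ x ∂μ, u (f x) = u x := by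
  -- each superlevel set is mapped into itself up to a null set, without loss of measure
  have hlevel : ∀ c : ℚ, f ⁻¹' {x | c < u x} =ᵐ[μ] {x | c < u x} := fun c =>
    have hA : MeasurableSet {x | (c : ℝ) < u x} := measurableSet_lt measurable_const hu
    ae_eq_of_ae_subset_of_measure_ge (hle.mono fun x hx hc => lt_of_lt_of_le hc hx)
      (hf.measure_preimage hA.nullMeasurableSet).ge
      (hA.preimage hf.measurable).nullMeasurableSet (measure_ne_top μ _)
  filter_upwards [hle, ae_all_iff.2 hlevel] with x hx hxlevel
  by_contra hne
  obtain ⟨c, hxc, hcx⟩ := exists_rat_btwn (lt_of_le_of_ne hx hne)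
  exact hxc.not_gt ((Iff.of_eq (hxlevel c)).2 hcx)

namespace Setting

variable {Θ : Type*} [MeasurableSpace Θ] (S : Setting Θ) {t M : ℝ}

theorem h_continuousOn : ContinuousOn S.h (Set.Ici 0) :=
  fun x hx => (S.h_hasDeriv x hx).continuousWithinAt

theorem h_strictMonoOn : StrictMonoOn S.h (Set.Ici 0) := by
  refine strictMonoOn_of_hasDerivWithinAt_pos (convex_Ici 0) S.h_continuousOn (f' := S.h')
    (fun x hx => ?_) fun x hx => S.h'_pos x (by simpa using hx)
  rw [interior_Ici] at hx ⊢
  exact (S.h_hasDeriv x (Set.mem_Ici.2 (le_of_lt hx))).mono Set.Ioi_subset_Ici_self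

theorem h_pos {x : ℝ} (hx : 0 < x) : 0 < S.h x := by
  simpa [S.h_zero] using S.h_strictMonoOn Set.self_mem_Ici hx.le hx

theorem mul_h_lt_mul_h {x y : ℝ} (hx : 0 < x) (hxy : x < y) : x * S.h y < y * S.h x := by
  have hy := hx.trans hxy
  have hslope := S.h_strictConcave.secant_strict_mono Set.self_mem_Ici hx.le hy.le hx.ne'
    hy.ne' hxy
  simp only [S.h_zero, sub_zero] at hslope
  rwa [div_lt_div_iff₀ hy hx, mul_comm, mul_comm (S.h x)] at hslope

theorem f_coeff_pos (t : ℝ) (θ : Θ) : 0 < Real.exp (-t) * S.g θ :=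
  mul_pos (Real.exp_pos _) (S.g_pos θ)

theorem f_pos (t : ℝ) (θ : Θ) {x : ℝ} (hx : 0 < x) : 0 < S.f t θ x :=
  mul_pos (S.f_coeff_pos t θ) (S.h_pos hx)

theorem f_eq_zero_iff (t : ℝ) (θ : Θ) {x : ℝ} (hx : 0 ≤ x) : S.f t θ x = 0 ↔ x = 0 := by
  refine ⟨fun h0 => ?_, fun h0 => by simp [f, h0, S.h_zero]⟩
  by_contra hne
  exact (S.f_pos t θ (lt_of_le_of_ne hx (Ne.symm hne))).ne' h0

theorem f_monotoneOn (t : ℝ) (θ : Θ) : MonotoneOn (S.f t θ) (Set.Ici 0) :=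
  fun _ hx _ hy hxy => mul_le_mul_of_nonneg_left (S.h_strictMonoOn.monotoneOn hx hy hxy)
    (S.f_coeff_pos t θ).le

theorem f_nonneg (t : ℝ) (θ : Θ) {x : ℝ} (hx : 0 ≤ x) : 0 ≤ S.f t θ x := by
  simpa [f, S.h_zero] using S.f_monotoneOn t θ Set.self_mem_Ici hx hx

theorem continuousOn_f (t : ℝ) (θ : Θ) : ContinuousOn (S.f t θ) (Set.Ici 0) :=
  continuousOn_const.mul S.h_continuousOn

theorem mul_f_lt_mul_f (t : ℝ) (θ : Θ) {x y : ℝ} (hx : 0 < x) (hxy : x < y) :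
    x * S.f t θ y < y * S.f t θ x := by
  have := mul_lt_mul_of_pos_left (S.mul_h_lt_mul_h hx hxy) (S.f_coeff_pos t θ)
  simp only [f]
  linarith

theorem measurable_f_comp {u : Θ → ℝ} (hu : Measurable u) (hu0 : ∀ θ, 0 ≤ u θ) :
    Measurable fun θ => S.f t θ (u θ) := by
  have hh : Continuous fun x : ℝ => S.h (max 0 x) :=
    S.h_continuousOn.comp_continuous (continuous_const.max continuous_id) fun x => le_max_left 0 x
  have : (fun θ => S.f t θ (u θ)) = fun θ => Real.exp (-t) * S.g θ * S.h (max 0 (u θ)) := by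
    simp only [f, max_eq_right (hu0 _)]
  rw [this]
  exact (measurable_const.mul S.g_meas).mul (hh.measurable.comp hu)

theorem ψ_succ (n : ℕ) (θ : Θ) :
    S.ψ t M (n + 1) θ = S.f t (S.Tinv θ) (S.ψ t M n (S.Tinv θ)) := by
  change S.f t (S.T^[n] (S.Tinv^[n + 1] θ)) (S.fn t n (S.Tinv^[n + 1] θ) M) = _
  rw [Function.iterate_succ_apply, S.right_inv.iterate n]
  rfl

theorem ψ_nonneg (hM : 0 ≤ M) (n : ℕ) (θ : Θ) : 0 ≤ S.ψ t M n θ := by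
  induction n generalizing θ with
  | zero => exact hM
  | succ n ih => rw [ψ_succ]; exact S.f_nonneg t _ (ih _)

theorem measurable_ψ (hM : 0 ≤ M) (n : ℕ) : Measurable (S.ψ t M n) := by
  induction n with
  | zero => exact measurable_const
  | succ n ih =>
    simp_rw [funext (S.ψ_succ (t := t) (M := M) n)]
    exact (S.measurable_f_comp ih (S.ψ_nonneg hM n)).comp S.Tinv_meas

theorem ψ_succ_le (hM : 0 ≤ M) (hMf : ∀ θ, S.f t θ M < M) (n : ℕ) (θ : Θ) :
    S.ψ t M (n + 1) θ ≤ S.ψ t M n θ := by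
  induction n generalizing θ with
  | zero => exact (hMf _).le
  | succ n ih =>
    rw [S.ψ_succ (n + 1) θ, S.ψ_succ n θ]
    exact S.f_monotoneOn t _ (S.ψ_nonneg hM _ _) (S.ψ_nonneg hM _ _) (ih _)

theorem tendsto_ψ_φ (hM : 0 ≤ M) (hMf : ∀ θ, S.f t θ M < M) (θ : Θ) :
    Tendsto (fun n : ℕ => S.ψ t M (n + 1) θ) atTop (𝓝 (S.φ t M θ)) :=
  tendsto_atTop_ciInf (antitone_nat_of_succ_le fun n => S.ψ_succ_le hM hMf (n + 1) θ)
    ⟨0, Set.forall_mem_range.2 fun n => S.ψ_nonneg hM (n + 1) θ⟩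

theorem φ_nonneg (hM : 0 ≤ M) (θ : Θ) : 0 ≤ S.φ t M θ :=
  le_ciInf fun _ => S.ψ_nonneg hM _ _

theorem measurable_φ (hM : 0 ≤ M) (hMf : ∀ θ, S.f t θ M < M) : Measurable (S.φ t M) :=
  measurable_of_tendsto_metrizable (fun n => S.measurable_ψ hM (n + 1))
    (tendsto_pi_nhds.2 (S.tendsto_ψ_φ hM hMf))

theorem f_φ (hM : 0 ≤ M) (hMf : ∀ θ, S.f t θ M < M) (θ : Θ) :
    S.f t θ (S.φ t M θ) = S.φ t M (S.T θ) := by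
  have hψ : Tendsto (fun n : ℕ => S.ψ t M (n + 1) θ) atTop (𝓝[Set.Ici 0] (S.φ t M θ)) :=
    tendsto_nhdsWithin_iff.2 ⟨S.tendsto_ψ_φ hM hMf θ, .of_forall fun n => S.ψ_nonneg hM _ _⟩
  refine tendsto_nhds_unique ((S.continuousOn_f t θ _ (S.φ_nonneg hM θ)).tendsto.comp hψ) ?_
  have := (S.tendsto_ψ_φ hM hMf (S.T θ)).comp (tendsto_add_atTop_nat 1)
  simpa only [Function.comp_def, ψ_succ, S.left_inv θ] using this

variable {φ' : Θ → ℝ}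

theorem le_ψ_of_iterate_le (hnonneg : ∀ θ, 0 ≤ φ' θ)
    (hinv : ∀ θ, S.f t θ (φ' θ) = φ' (S.T θ)) {n : ℕ} {θ : Θ} (hle : φ' (S.Tinv^[n] θ) ≤ M) :
    φ' θ ≤ S.ψ t M n θ := by
  induction n generalizing θ with
  | zero => exact hle
  | succ n ih =>
    rw [ψ_succ, ← S.right_inv θ, ← hinv, S.right_inv θ]
    exact S.f_monotoneOn t _ (hnonneg _) ((hnonneg _).trans (ih hle)) (ih hle)

theorem le_φ_of_forall_iterate_le (hnonneg : ∀ θ, 0 ≤ φ' θ)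
    (hinv : ∀ θ, S.f t θ (φ' θ) = φ' (S.T θ)) {θ : Θ} (hle : ∀ n, φ' (S.Tinv^[n] θ) ≤ M) :
    φ' θ ≤ S.φ t M θ :=
  le_ciInf fun n => S.le_ψ_of_iterate_le hnonneg hinv (hle (n + 1))

def measurableEquiv : Θ ≃ᵐ Θ where
  toFun := S.T
  invFun := S.Tinv
  left_inv := S.left_inv
  right_inv := S.right_inv
  measurable_toFun := S.T_meas
  measurable_invFun := S.Tinv_meas

theorem measurePreserving_Tinv {μ : Measure Θ} (hT : MeasurePreserving S.T μ μ) :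
    MeasurePreserving S.Tinv μ μ :=
  hT.symm S.measurableEquiv

theorem ae_eq_zero_or_ae_pos {μ : Measure Θ} (hμ : Ergodic S.T μ) (hmeas : Measurable φ')
    (hnonneg : ∀ θ, 0 ≤ φ' θ) (hinv : ∀ θ, S.f t θ (φ' θ) = φ' (S.T θ)) :
    (∀ᵐ θ ∂μ, φ' θ = 0) ∨ ∀ᵐ θ ∂μ, 0 < φ' θ := by
  have hzero : S.T ⁻¹' {θ | φ' θ = 0} = {θ | φ' θ = 0} := by
    ext θ
    simp only [Set.mem_preimage, Set.mem_ofPred_eq, ← hinv, S.f_eq_zero_iff t θ (hnonneg θ)]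
  refine (hμ.ae_mem_or_ae_notMem (hmeas (measurableSet_singleton 0)) hzero).imp id
    fun h => h.mono fun θ hθ => lt_of_le_of_ne (hnonneg θ) (Ne.symm hθ)

theorem ae_subinvariant_le_superinvariant {μ : Measure Θ} [IsFiniteMeasure μ]
    (hT : MeasurePreserving S.T μ μ) {a b : Θ → ℝ} (ha : Measurable a) (hb : Measurable b)
    (ha_pos : ∀ᵐ θ ∂μ, 0 < a θ) (hb_nonneg : ∀ θ, 0 ≤ b θ)
    (ha_super : ∀ θ, S.f t θ (a θ) ≤ a (S.T θ)) (hb_sub : ∀ θ, b (S.T θ) ≤ S.f t θ (b θ)) :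
    ∀ᵐ θ ∂μ, b θ ≤ a θ := by
  set u : Θ → ℝ := fun θ => max (b θ / a θ) 1
  have hTa : ∀ θ, 0 < a θ → 0 < a (S.T θ) := fun θ hθ => (S.f_pos t θ hθ).trans_le (ha_super θ)
  have hdrop : ∀ θ, 0 < a θ → a θ < b θ → u (S.T θ) < u θ := by
    intro θ hθ hab
    have hfa := S.f_pos t θ hθ
    have hratio : b (S.T θ) / a (S.T θ) < b θ / a θ := calc
      b (S.T θ) / a (S.T θ) ≤ S.f t θ (b θ) / S.f t θ (a θ) :=
        div_le_div₀ (S.f_nonneg t θ (hb_nonneg θ)) (hb_sub θ) hfa (ha_super θ)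
      _ < b θ / a θ := by
        rw [div_lt_div_iff₀ hfa hθ]
        linarith [S.mul_f_lt_mul_f t θ hθ hab]
    exact (max_lt hratio ((one_lt_div hθ).2 hab)).trans_le (le_max_left _ _)
  have hle : ∀ θ, 0 < a θ → u (S.T θ) ≤ u θ := by
    intro θ hθ
    rcases le_or_gt (b θ) (a θ) with hba | hab
    · refine (max_le ?_ le_rfl).trans (le_max_right _ _)
      rw [div_le_one (hTa θ hθ)]
      calc b (S.T θ) ≤ S.f t θ (b θ) := hb_sub θ
        _ ≤ S.f t θ (a θ) := S.f_monotoneOn t θ (hb_nonneg θ) hθ.le hba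
        _ ≤ a (S.T θ) := ha_super θ
    · exact (hdrop θ hθ hab).le
  have hu : Measurable u := (hb.div ha).max measurable_const
  filter_upwards [ha_pos, hT.ae_comp_eq_of_ae_comp_le hu (ha_pos.mono hle)] with θ hθ heq
  exact not_lt.1 fun hab => (hdrop θ hθ hab).ne heq

end Setting

/-- for an ergodic `T`-invariant probability measure `μ`, every measurable
`T_t`-invariant function `φ : Θ → [0,∞)` satisfies `φ = 0` μ-a.e. or `φ = φ_t` μ-a.e. -/
theorem stmt2 {Θ : Type*} [MeasurableSpace Θ] (S : Setting Θ) (t M : ℝ)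
    (hM : 0 < M) (hMf : ∀ θ, S.f t θ M < M)
    (μ : Measure Θ) [IsProbabilityMeasure μ] (hμ : Ergodic S.T μ)
    (φ' : Θ → ℝ) (hmeas : Measurable φ') (hnonneg : ∀ θ, 0 ≤ φ' θ)
    (hinv : ∀ θ, S.f t θ (φ' θ) = φ' (S.T θ)) :
    (∀ᵐ θ ∂μ, φ' θ = 0) ∨ (∀ᵐ θ ∂μ, φ' θ = S.φ t M θ) := by
  have hT : MeasurePreserving S.T μ μ := hμ.toMeasurePreserving
  refine (S.ae_eq_zero_or_ae_pos hμ hmeas hnonneg hinv).imp id fun hpos => ?_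
  have hsub : ∀ θ, φ' (S.T θ) ≤ S.f t θ (φ' θ) := fun θ => (hinv θ).ge
  have hle_M : ∀ᵐ θ ∂μ, φ' θ ≤ M :=
    S.ae_subinvariant_le_superinvariant hT measurable_const hmeas (.of_forall fun _ => hM) hnonneg
      (fun θ => (hMf θ).le) hsub
  have hle_φ : ∀ᵐ θ ∂μ, φ' θ ≤ S.φ t M θ := by
    have hTinv := S.measurePreserving_Tinv hT
    filter_upwards [ae_all_iff.2 fun n => (hTinv.iterate n).quasiMeasurePreserving.ae hle_M]
      with θ hθ using S.le_φ_of_forall_iterate_le hnonneg hinv hθ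
  have hφ_le : ∀ᵐ θ ∂μ, S.φ t M θ ≤ φ' θ :=
    S.ae_subinvariant_le_superinvariant hT hmeas (S.measurable_φ hM.le hMf) hpos
      (S.φ_nonneg hM.le) (fun θ => (hinv θ).le) fun θ => (S.f_φ hM.le hMf θ).ge
  filter_upwards [hle_φ, hφ_le] with θ h₁ h₂ using le_antisymm h₁ h₂
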